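/- Let μ = ESN₂(ω,α,τ) with ω ∈ (−1,1), α = (α₁,α₂) ∈ ℝ², τ ∈ ℝ, and suppose 0 < α₁* < α₂*. Then the marginal survival functions of μ are eventually strictly ordered: there exists x₀ ∈ ℝ such that for all x ≥ x₀, μ{y ∈ ℝ² : y₁ ≥ x} < μ{y ∈ ℝ² : y₂ ≥ x} (equivalently, 1 − Φ_{α₁*,τ₁*}(x) < 1 − Φ_{α₂*,τ₂*}(x) for all sufficiently large x). -/
import Mathlib

open MeasureTheory Filter Matrix

/-- standard normal density -/
noncomputable def stdPdf (t : ℝ) : ℝ := Real.exp (-t^2/2) / Real.sqrt (2*Real.pi)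

/-- standard normal cdf Φ -/
noncomputable def stdCdf (x : ℝ) : ℝ := ∫ t in Set.Iic x, stdPdf t

/-- univariate extended skew-normal cdf Φ_{α,τ} -/
noncomputable def esnCdf (α τ x : ℝ) : ℝ :=
  ∫ t in Set.Iic x, stdPdf t * stdCdf (α*t+τ) / stdCdf (τ / Real.sqrt (1+α^2))

/-- bivariate standard normal density with correlation ω -/
noncomputable def phi2 (ω : ℝ) (x : ℝ × ℝ) : ℝ :=
  Real.exp (-(x.1^2 - 2*ω*x.1*x.2 + x.2^2)/(2*(1-ω^2))) / (2*Real.pi*Real.sqrt (1-ω^2))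

/-- bivariate extended skew-normal density -/
noncomputable def esn2Density (ω a1 a2 τ : ℝ) (x : ℝ × ℝ) : ℝ :=
  phi2 ω x * stdCdf (a1*x.1 + a2*x.2 + τ) / stdCdf (τ / Real.sqrt (1 + a1^2 + a2^2 + 2*ω*a1*a2))

/-- bivariate extended skew-normal distribution ESN₂(ω,α,τ) -/
noncomputable def esn2 (ω a1 a2 τ : ℝ) : Measure (ℝ × ℝ) :=
  volume.withDensity (fun x => ENNReal.ofReal (esn2Density ω a1 a2 τ x))

/-- marginal slant parameter α_j*; `aj` is α_j and `ak` is α_{3-j} -/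
noncomputable def astar (ω aj ak : ℝ) : ℝ := (aj + ω*ak) / Real.sqrt (1 + ak^2*(1-ω^2))

/-- marginal extension parameter τ_j*; `ak` is α_{3-j} -/
noncomputable def tstar (ω ak τ : ℝ) : ℝ := τ / Real.sqrt (1 + ak^2*(1-ω^2))

/-- ᾱ_j = √(1+α_j*²); `aj` is α_j and `ak` is α_{3-j} -/
noncomputable def abar (ω aj ak : ℝ) : ℝ := Real.sqrt (1 + (astar ω aj ak)^2)

/- ### Auxiliary lemmas -/

lemma stdPdf_pos (t : ℝ) : 0 < stdPdf t := by
  unfold stdPdf; positivity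

lemma integrable_stdPdf : Integrable stdPdf := by
  have h : stdPdf = fun t => Real.exp (-(1/2) * t^2) / Real.sqrt (2*Real.pi) := by
    funext t; unfold stdPdf; ring_nf
  rw [h]
  exact (integrable_exp_neg_mul_sq (by norm_num)).div_const _

lemma stdCdf_pos (x : ℝ) : 0 < stdCdf x := by
  unfold stdCdf
  rw [setIntegral_pos_iff_support_of_nonneg_ae
    (Filter.Eventually.of_forall fun t => (stdPdf_pos t).le)
    integrable_stdPdf.integrableOn]
  have h : Function.support stdPdf ∩ Set.Iic x = Set.Iic x := by
    rw [Set.inter_eq_right]; intro t _; exact (stdPdf_pos t).ne'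
  rw [h, Real.volume_Iic]
  exact ENNReal.zero_lt_top

lemma stdCdf_lt {a b : ℝ} (hab : a < b) : stdCdf a < stdCdf b := by
  have hpos : 0 < ∫ t in Set.Ioc a b, stdPdf t := by
    rw [setIntegral_pos_iff_support_of_nonneg_ae
      (Filter.Eventually.of_forall fun t => (stdPdf_pos t).le)
      integrable_stdPdf.integrableOn]
    have h : Function.support stdPdf ∩ Set.Ioc a b = Set.Ioc a b := by
      rw [Set.inter_eq_right]; intro t _; exact (stdPdf_pos t).ne'
    rw [h, Real.volume_Ioc]
    simp [hab]
  have hsplit : stdCdf b = stdCdf a + ∫ t in Set.Ioc a b, stdPdf t := by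
    unfold stdCdf
    rw [← setIntegral_union (Set.Iic_disjoint_Ioc le_rfl) measurableSet_Ioc
      integrable_stdPdf.integrableOn integrable_stdPdf.integrableOn,
      Set.Iic_union_Ioc_eq_Iic hab.le]
  linarith

lemma stdCdf_mono : Monotone stdCdf := fun a b hab => by
  rcases eq_or_lt_of_le hab with rfl | h
  · exact le_refl _
  · exact (stdCdf_lt h).le

lemma stdCdf_measurable : Measurable stdCdf := stdCdf_mono.measurable

lemma stdCdf_nonneg (x : ℝ) : 0 ≤ stdCdf x := (stdCdf_pos x).le

lemma stdCdf_le (x : ℝ) : stdCdf x ≤ ∫ t, stdPdf t := by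
  unfold stdCdf
  exact setIntegral_le_integral integrable_stdPdf
    (Filter.Eventually.of_forall fun t => (stdPdf_pos t).le)

lemma phi2_pos {ω : ℝ} (hω : ω^2 < 1) (x : ℝ × ℝ) : 0 < phi2 ω x := by
  unfold phi2
  have h : 0 < 1 - ω^2 := by linarith
  positivity

lemma phi2_continuous (ω : ℝ) : Continuous (phi2 ω) := by
  unfold phi2; fun_prop

lemma integrable_phi2 {ω : ℝ} (hω : ω^2 < 1) : Integrable (phi2 ω) := by
  have h : 0 < 1 - ω^2 := by linarith
  set c : ℝ := (1 - |ω|)/(2*(1-ω^2)) with hc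
  have hω1 : |ω| < 1 := by nlinarith [sq_abs ω, abs_nonneg ω]
  have hcpos : 0 < c := div_pos (by linarith) (by linarith)
  have hmaj : Integrable (fun p : ℝ × ℝ =>
      (Real.exp (-c * p.1^2) * Real.exp (-c * p.2^2)) / (2*Real.pi*Real.sqrt (1-ω^2))) := by
    rw [Measure.volume_eq_prod]
    exact ((integrable_exp_neg_mul_sq hcpos).mul_prod (integrable_exp_neg_mul_sq hcpos)).div_const _
  refine hmaj.mono (phi2_continuous ω).aestronglyMeasurable
    (Filter.Eventually.of_forall fun p => ?_)
  have hd : 0 < 2*Real.pi*Real.sqrt (1-ω^2) := by positivity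
  rw [Real.norm_eq_abs, Real.norm_eq_abs, abs_of_pos (phi2_pos hω p),
    abs_of_pos (by positivity)]
  unfold phi2
  rw [← Real.exp_add]
  have key : (1-|ω|) * (p.1^2 + p.2^2) ≤ p.1^2 - 2*ω*p.1*p.2 + p.2^2 := by
    have h1 : ω*(p.1*p.2) ≤ |ω| * |p.1 * p.2| := le_trans (le_abs_self _) (le_of_eq (abs_mul _ _))
    have h2 : |p.1 * p.2| ≤ (p.1^2 + p.2^2)/2 := by
      rw [abs_mul]
      nlinarith [sq_nonneg (|p.1| - |p.2|), sq_abs p.1, sq_abs p.2, abs_nonneg p.1, abs_nonneg p.2]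
    nlinarith [abs_nonneg ω, abs_nonneg (p.1*p.2)]
  have heq : -c * p.1^2 + -c * p.2^2 = (-((1-|ω|) * (p.1^2 + p.2^2)))/(2*(1-ω^2)) := by
    rw [hc]; field_simp; ring
  rw [heq]
  gcongr

lemma slant_lt {ω a1 a2 : ℝ} (hω : ω^2 < 1)
    (h1 : 0 < astar ω a1 a2) (h2 : astar ω a1 a2 < astar ω a2 a1) : a1 < a2 := by
  have hω' : 0 < 1 - ω^2 := by linarith
  have hs1 : 0 < Real.sqrt (1 + a2^2*(1-ω^2)) := Real.sqrt_pos.mpr (by positivity)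
  have hs2 : 0 < Real.sqrt (1 + a1^2*(1-ω^2)) := Real.sqrt_pos.mpr (by positivity)
  have hq1 : Real.sqrt (1 + a2^2*(1-ω^2))^2 = 1 + a2^2*(1-ω^2) :=
    Real.sq_sqrt (by positivity)
  have hq2 : Real.sqrt (1 + a1^2*(1-ω^2))^2 = 1 + a1^2*(1-ω^2) :=
    Real.sq_sqrt (by positivity)
  unfold astar at h1 h2
  have hu : 0 < a1 + ω*a2 := by
    by_contra hcon
    push_neg at hcon
    exact absurd (div_nonpos_of_nonpos_of_nonneg hcon hs1.le) (not_le_of_gt h1)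
  have h2' : 0 < astar ω a2 a1 := lt_trans h1 h2
  unfold astar at h2'
  have hv : 0 < a2 + ω*a1 := by
    by_contra hcon
    push_neg at hcon
    exact absurd (div_nonpos_of_nonpos_of_nonneg hcon hs2.le) (not_le_of_gt h2')
  rw [div_lt_div_iff₀ hs1 hs2] at h2
  have hsq : ((a1 + ω*a2) * Real.sqrt (1 + a1^2*(1-ω^2)))^2
      < ((a2 + ω*a1) * Real.sqrt (1 + a2^2*(1-ω^2)))^2 := by
    apply pow_lt_pow_left₀ h2 (by positivity) (by norm_num)
  rw [mul_pow, mul_pow, hq1, hq2] at hsq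
  have hω1 : (0:ℝ) < 1 + ω := by nlinarith [sq_nonneg (ω+1)]
  have hsum : 0 < a1 + a2 := by nlinarith [hu, hv, hω1]
  have hK : 0 ≤ a1^2 + a2^2 + 2*ω*a1*a2 := by
    nlinarith [sq_nonneg (a1+a2), sq_nonneg (a1-a2)]
  by_contra hcon
  push_neg at hcon
  have hA : 0 ≤ a1^2 - a2^2 := by nlinarith
  nlinarith [mul_nonneg (mul_nonneg hω'.le hA)
    (by linarith : (0:ℝ) ≤ 1 + (a1^2 + a2^2 + 2*ω*a1*a2)), hsq]

/-- If 0 < α₁* < α₂*, the marginal survival functions of ESN₂(ω,α,τ) are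
eventually strictly ordered. -/
theorem esn2_marginal_survival_ordered
    (ω : ℝ) (hω : ω ∈ Set.Ioo (-1 : ℝ) 1) (a1 a2 τ : ℝ)
    (h1 : 0 < astar ω a1 a2) (h2 : astar ω a1 a2 < astar ω a2 a1) :
    ∃ x₀ : ℝ, ∀ x ≥ x₀,
      ((esn2 ω a1 a2 τ) {y : ℝ × ℝ | x ≤ y.1}).toReal <
      ((esn2 ω a1 a2 τ) {y : ℝ × ℝ | x ≤ y.2}).toReal := by
  obtain ⟨hωl, hωr⟩ := hω
  have hω2 : ω^2 < 1 := by nlinarith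
  have ha : a1 < a2 := slant_lt hω2 h1 h2
  set f : ℝ × ℝ → ℝ := esn2Density ω a1 a2 τ with hfdef
  have hcpos : 0 < stdCdf (τ / Real.sqrt (1 + a1^2 + a2^2 + 2*ω*a1*a2)) := stdCdf_pos _
  have hfnn : ∀ p, 0 ≤ f p := fun p =>
    div_nonneg (mul_nonneg (phi2_pos hω2 p).le (stdCdf_nonneg _)) hcpos.le
  have hfmeas : Measurable f := by
    apply Measurable.div_const
    exact (phi2_continuous ω).measurable.mul
      (stdCdf_measurable.comp (by fun_prop : Measurable fun p : ℝ × ℝ => a1*p.1 + a2*p.2 + τ))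
  have hI : (0:ℝ) ≤ ∫ t, stdPdf t := integral_nonneg fun t => (stdPdf_pos t).le
  have hint : Integrable f := by
    refine ((integrable_phi2 hω2).mul_const
      ((∫ t, stdPdf t) / stdCdf (τ / Real.sqrt (1 + a1^2 + a2^2 + 2*ω*a1*a2)))).mono
      hfmeas.aestronglyMeasurable (Filter.Eventually.of_forall fun p => ?_)
    rw [Real.norm_eq_abs, Real.norm_eq_abs, abs_of_nonneg (hfnn p),
      abs_of_nonneg (mul_nonneg (phi2_pos hω2 p).le (div_nonneg hI hcpos.le)),
      ← mul_div_assoc]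
    exact div_le_div_of_nonneg_right
      (mul_le_mul_of_nonneg_left (stdCdf_le _) (phi2_pos hω2 p).le) hcpos.le
  -- value of the measure
  have hval : ∀ S : Set (ℝ × ℝ), MeasurableSet S →
      ((esn2 ω a1 a2 τ) S).toReal = ∫ p in S, f p := by
    intro S hS
    rw [esn2, withDensity_apply _ hS,
      ← ofReal_integral_eq_lintegral_ofReal hint.integrableOn
        (Filter.Eventually.of_forall fun p => hfnn p),
      ENNReal.toReal_ofReal (integral_nonneg fun p => hfnn p)]
  -- measure preserving swap
  have hmp : MeasurePreserving (Prod.swap : ℝ × ℝ → ℝ × ℝ) volume volume := by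
    rw [Measure.volume_eq_prod]
    exact Measure.measurePreserving_swap
  have hemb : MeasurableEmbedding (Prod.swap : ℝ × ℝ → ℝ × ℝ) :=
    MeasurableEquiv.prodComm.measurableEmbedding
  have hg : Integrable (fun p : ℝ × ℝ => f (Prod.swap p)) :=
    (hmp.integrable_comp_emb hemb).mpr hint
  refine ⟨0, fun x _ => ?_⟩
  have hS1 : MeasurableSet {p : ℝ × ℝ | x ≤ p.1} :=
    measurableSet_le measurable_const measurable_fst
  have hS2 : MeasurableSet {p : ℝ × ℝ | x ≤ p.2} :=
    measurableSet_le measurable_const measurable_snd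
  rw [hval _ hS1, hval _ hS2]
  -- turn the second integral into an integral over the first region
  have hpre : (Prod.swap : ℝ × ℝ → ℝ × ℝ) ⁻¹' {p : ℝ × ℝ | x ≤ p.2} = {p : ℝ × ℝ | x ≤ p.1} := rfl
  have hswap : ∫ p in {p : ℝ × ℝ | x ≤ p.2}, f p
      = ∫ p in {p : ℝ × ℝ | x ≤ p.1}, f (Prod.swap p) := by
    rw [← hmp.setIntegral_preimage_emb hemb f {p : ℝ × ℝ | x ≤ p.2}, hpre]
  rw [hswap]
  -- split the region
  set A : Set (ℝ × ℝ) := Set.Ici x ×ˢ Set.Ici x with hAdef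
  set B : Set (ℝ × ℝ) := Set.Ici x ×ˢ Set.Iio x with hBdef
  have hA : MeasurableSet A := measurableSet_Ici.prod measurableSet_Ici
  have hB : MeasurableSet B := measurableSet_Ici.prod measurableSet_Iio
  have hAB : {p : ℝ × ℝ | x ≤ p.1} = A ∪ B := by
    ext p
    simp only [Set.mem_setOf_eq, Set.mem_union, hAdef, hBdef, Set.mem_prod,
      Set.mem_Ici, Set.mem_Iio]
    constructor
    · intro h
      rcases le_or_gt x p.2 with h' | h'
      · exact Or.inl ⟨h, h'⟩
      · exact Or.inr ⟨h, h'⟩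
    · rintro (⟨h, _⟩ | ⟨h, _⟩) <;> exact h
  have hdisj : Disjoint A B := by
    rw [Set.disjoint_left]
    rintro p ⟨_, h1'⟩ ⟨_, h2'⟩
    exact absurd (Set.mem_Ici.mp h1') (not_le_of_gt (Set.mem_Iio.mp h2'))
  rw [hAB, setIntegral_union hdisj hB hint.integrableOn hint.integrableOn,
    setIntegral_union hdisj hB hg.integrableOn hg.integrableOn]
  -- the integrals over A agree
  have hApre : (Prod.swap : ℝ × ℝ → ℝ × ℝ) ⁻¹' A = A := by
    ext p
    simp only [Set.mem_preimage, hAdef, Set.mem_prod, Set.mem_Ici, Prod.fst_swap, Prod.snd_swap]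
    tauto
  have hAeq : ∫ p in A, f (Prod.swap p) = ∫ p in A, f p := by
    rw [← hmp.setIntegral_preimage_emb hemb f A, hApre]
  rw [hAeq]
  -- strict inequality on B
  have key : ∀ p ∈ B, f p < f (Prod.swap p) := by
    rintro p ⟨hp1, hp2⟩
    simp only [Set.mem_Ici] at hp1
    simp only [Set.mem_Iio] at hp2
    have hphi : phi2 ω (Prod.swap p) = phi2 ω p := by
      unfold phi2
      simp only [Prod.fst_swap, Prod.snd_swap]
      ring_nf
    have harg : a1*p.1 + a2*p.2 + τ < a1*p.2 + a2*p.1 + τ := by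
      nlinarith [mul_pos (sub_pos.mpr ha) (sub_pos.mpr (lt_of_lt_of_le hp2 hp1))]
    show esn2Density ω a1 a2 τ p < esn2Density ω a1 a2 τ (Prod.swap p)
    unfold esn2Density
    rw [hphi]
    simp only [Prod.fst_swap, Prod.snd_swap]
    exact (div_lt_div_iff_of_pos_right hcpos).mpr
      (mul_lt_mul_of_pos_left (stdCdf_lt harg) (phi2_pos hω2 p))
  have hsub : ∫ p in B, (f (Prod.swap p) - f p)
      = (∫ p in B, f (Prod.swap p)) - ∫ p in B, f p :=
    integral_sub hg.integrableOn hint.integrableOn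
  have hposB : 0 < ∫ p in B, (f (Prod.swap p) - f p) := by
    rw [setIntegral_pos_iff_support_of_nonneg_ae
      ((ae_restrict_iff' hB).mpr (Filter.Eventually.of_forall fun p hp =>
        sub_nonneg.mpr (key p hp).le))
      ((hg.sub hint).integrableOn)]
    have hsup : Function.support (fun p => f (Prod.swap p) - f p) ∩ B = B :=
      Set.inter_eq_right.mpr fun p hp => (sub_pos.mpr (key p hp)).ne'
    rw [hsup, hBdef, Measure.volume_eq_prod, Measure.prod_prod, Real.volume_Ici, Real.volume_Iio]
    simp
  linarith [hposB, hsub]
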